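/- For every fixed part P' ∈ 𝒫', the set function 𝒮 ↦ min{|U_𝒮 ∩ P'|, |P'| − |U_𝒮 ∩ P'|} on subsets of 𝒫 is submodular. -/

import Mathlib

/-!
On subfamilies `𝒮` of a partition, `x 𝒮 = |U_𝒮 ∩ P'|` is modular and monotone:
`x (𝒮₁ ∪ 𝒮₂) + x (𝒮₁ ∩ 𝒮₂) = x 𝒮₁ + x 𝒮₂` and `x (𝒮₁ ∩ 𝒮₂) ≤ x 𝒮₁ ≤ x (𝒮₁ ∪ 𝒮₂)`.
The map `t ↦ min t (|P'| - t)` is concave, and a concave `f` satisfies `f u + f d ≤ f a + f b`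
whenever `a + b = u + d` with `d ≤ a ≤ u`: the pair `a, b` is a mean-preserving contraction
of the pair `u, d`.
-/

open Finset symmDiff

variable {V : Type*}

/-- `𝒜` is a partition of the finite set `V`: parts are nonempty, pairwise disjoint,
and their union is all of `V`. -/
def IsPartition [DecidableEq V] [Fintype V] (𝒜 : Finset (Finset V)) : Prop :=
  (∀ P ∈ 𝒜, P.Nonempty) ∧
  (∀ P ∈ 𝒜, ∀ Q ∈ 𝒜, P ≠ Q → Disjoint P Q) ∧
  𝒜.biUnion id = Finset.univ

/-- `φ(𝒮, 𝒮') = |U_𝒮 △ U_𝒮'|`. -/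
def phi [DecidableEq V] (𝒮 𝒮' : Finset (Finset V)) : ℕ :=
  ((𝒮.biUnion id) ∆ (𝒮'.biUnion id)).card

theorem ConcaveOn.add_le_add_of_le_of_add_eq {s : Set ℝ} {f : ℝ → ℝ} (hf : ConcaveOn ℝ s f)
    {a b d u : ℝ} (hd : d ∈ s) (hu : u ∈ s) (hda : d ≤ a) (hau : a ≤ u)
    (hsum : a + b = u + d) : f u + f d ≤ f a + f b := by
  rcases (hda.trans hau).eq_or_lt with rfl | hdu
  · obtain rfl : a = d := le_antisymm hau hda
    obtain rfl : b = a := by linarith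
    rfl
  set θ := (u - a) / (u - d)
  have hθ₀ : 0 ≤ θ := div_nonneg (by linarith) (by linarith)
  have hθ₁ : 0 ≤ 1 - θ := by
    rw [sub_nonneg, div_le_one (by linarith)]
    linarith
  have ha : θ • d + (1 - θ) • u = a := by
    simp only [smul_eq_mul, θ]
    field_simp
    ring
  have hb : (1 - θ) • d + θ • u = b := by
    rw [show b = u + d - a by linarith]
    simp only [smul_eq_mul, θ]
    field_simp
    ring
  have hfa := hf.2 hd hu hθ₀ hθ₁ (by ring)
  have hfb := hf.2 hd hu hθ₁ hθ₀ (by ring)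
  rw [ha] at hfa
  rw [hb] at hfb
  simp only [smul_eq_mul] at hfa hfb
  linarith

theorem concaveOn_min_const_sub (c : ℝ) : ConcaveOn ℝ Set.univ fun t : ℝ ↦ min t (c - t) :=
  (concaveOn_id convex_univ).inf ((concaveOn_const c convex_univ).sub (convexOn_id convex_univ))

theorem Finset.biUnion_inter_biUnion_of_pairwiseDisjoint {ι α : Type*} [DecidableEq ι]
    [DecidableEq α] {s t : Finset ι} {f : ι → Finset α}
    (h : (↑(s ∪ t) : Set ι).PairwiseDisjoint f) :
    s.biUnion f ∩ t.biUnion f = (s ∩ t).biUnion f := by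
  ext x
  simp only [mem_inter, mem_biUnion]
  constructor
  · rintro ⟨⟨i, hi, hxi⟩, j, hj, hxj⟩
    obtain rfl : i = j :=
      h.elim (by simp [hi]) (by simp [hj]) (not_disjoint_iff.2 ⟨x, hxi, hxj⟩)
    exact ⟨i, ⟨hi, hj⟩, hxi⟩
  · rintro ⟨i, ⟨hi, hj⟩, hxi⟩
    exact ⟨⟨i, hi, hxi⟩, i, hj, hxi⟩

theorem Finset.card_union_inter_add_card_inter_inter {α : Type*} [DecidableEq α]
    (s t u : Finset α) : #((s ∪ t) ∩ u) + #(s ∩ t ∩ u) = #(s ∩ u) + #(t ∩ u) := by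
  rw [union_inter_distrib_right, inter_inter_distrib_right, card_union_add_card_inter]

theorem IsPartition.pairwiseDisjoint [DecidableEq V] [Fintype V] {𝒜 : Finset (Finset V)}
    (hA : IsPartition 𝒜) : (𝒜 : Set (Finset V)).PairwiseDisjoint id :=
  fun P hP Q hQ hPQ ↦ hA.2.1 P hP Q hQ hPQ

theorem stmt5_general [DecidableEq V] [Fintype V] (𝒜 : Finset (Finset V))
    (hA : IsPartition 𝒜)
    (P' : Finset V)
    (𝒮₁ 𝒮₂ : Finset (Finset V)) (hS₁ : 𝒮₁ ⊆ 𝒜) (hS₂ : 𝒮₂ ⊆ 𝒜) :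
    min ((((𝒮₁ ∪ 𝒮₂).biUnion id ∩ P').card : ℝ))
        ((P'.card : ℝ) - (((𝒮₁ ∪ 𝒮₂).biUnion id ∩ P').card : ℝ)) ≤
      min (((𝒮₁.biUnion id ∩ P').card : ℝ))
          ((P'.card : ℝ) - ((𝒮₁.biUnion id ∩ P').card : ℝ)) +
      min (((𝒮₂.biUnion id ∩ P').card : ℝ))
          ((P'.card : ℝ) - ((𝒮₂.biUnion id ∩ P').card : ℝ)) -
      min ((((𝒮₁ ∩ 𝒮₂).biUnion id ∩ P').card : ℝ))
          ((P'.card : ℝ) - (((𝒮₁ ∩ 𝒮₂).biUnion id ∩ P').card : ℝ)) := by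
  let x : Finset (Finset V) → ℝ := fun 𝒮 ↦ #(𝒮.biUnion id ∩ P')
  have hmono {𝒮 𝒯 : Finset (Finset V)} (h : 𝒮 ⊆ 𝒯) : x 𝒮 ≤ x 𝒯 := by
    simp only [x]
    exact_mod_cast card_le_card <|
      inter_subset_inter_right (biUnion_subset_biUnion_of_subset_left id h)
  have hmod : x 𝒮₁ + x 𝒮₂ = x (𝒮₁ ∪ 𝒮₂) + x (𝒮₁ ∩ 𝒮₂) := by
    have hdisj := hA.pairwiseDisjoint.subset (coe_subset.2 (union_subset hS₁ hS₂))
    simp only [x, union_biUnion, ← biUnion_inter_biUnion_of_pairwiseDisjoint hdisj]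
    exact_mod_cast (card_union_inter_add_card_inter_inter _ _ _).symm
  have := (concaveOn_min_const_sub #P').add_le_add_of_le_of_add_eq trivial trivial
    (hmono inter_subset_left) (hmono subset_union_left) hmod
  linarith

/-- for a fixed part `P' ∈ 𝒫'`, the set function
`𝒮 ↦ min{|U_𝒮 ∩ P'|, |P'| − |U_𝒮 ∩ P'|}` on subsets of `𝒫` is submodular
(here `𝒜` plays the role of `𝒫` and `ℬ` the role of `𝒫'`). -/
theorem stmt5 [DecidableEq V] [Fintype V] (𝒜 ℬ : Finset (Finset V))
    (hA : IsPartition 𝒜) (hB : IsPartition ℬ)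
    (P' : Finset V) (hP' : P' ∈ ℬ)
    (𝒮₁ 𝒮₂ : Finset (Finset V)) (hS₁ : 𝒮₁ ⊆ 𝒜) (hS₂ : 𝒮₂ ⊆ 𝒜) :
    min ((((𝒮₁ ∪ 𝒮₂).biUnion id ∩ P').card : ℝ))
        ((P'.card : ℝ) - (((𝒮₁ ∪ 𝒮₂).biUnion id ∩ P').card : ℝ)) ≤
      min (((𝒮₁.biUnion id ∩ P').card : ℝ))
          ((P'.card : ℝ) - ((𝒮₁.biUnion id ∩ P').card : ℝ)) +
      min (((𝒮₂.biUnion id ∩ P').card : ℝ))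
          ((P'.card : ℝ) - ((𝒮₂.biUnion id ∩ P').card : ℝ)) -
      min ((((𝒮₁ ∩ 𝒮₂).biUnion id ∩ P').card : ℝ))
          ((P'.card : ℝ) - (((𝒮₁ ∩ 𝒮₂).biUnion id ∩ P').card : ℝ)) :=
  stmt5_general 𝒜 hA P' 𝒮₁ 𝒮₂ hS₁ hS₂
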